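/- Fix s ≥ 2, δ = 2^{-s}, κ = [1/√2]_s, and work with the rounded update U_{α,β,k,v}(x) = [α·([x - [β·⟨x,k⟩_s]_s·k]_s)]_s + [β·v·k]_s on ℝ² (all scalar operations rounded to F_s). Define states P₀ = (0,δ), P₁ = (δ,0), and updates: Z with α=3/4, β=1/4, k=(1,0), v=0; G with α=3/4, β=1/2, k=(κ,κ), v=6δ; F with α=1/4, β=3/4, k=(-κ,κ), v=0. Then Z(P₀)=P₀, Z(P₁)=P₁, F(G(P₀))=P₁, and F(G(P₁))=P₀. -/
import Mathlib


/-- The fixed-precision grid `F_s = {0} ∪ {±k·2^{-s} : 1 ≤ k ≤ 2^{2s}-1}`. -/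
def Fgrid (s : ℕ) : Set ℝ :=
  {0} ∪ {x : ℝ | ∃ k : ℕ, 1 ≤ k ∧ k ≤ 2 ^ (2 * s) - 1 ∧
    (x = (k : ℝ) * (2 : ℝ) ^ (-(s : ℤ)) ∨ x = -((k : ℝ) * (2 : ℝ) ^ (-(s : ℤ))))}

/-- `RoundsTo s x y` : `y` is a nearest element of `F_s` to `x`, ties toward smaller
absolute value. -/
def RoundsTo (s : ℕ) (x y : ℝ) : Prop :=
  y ∈ Fgrid s ∧ ∀ z ∈ Fgrid s, |x - y| < |x - z| ∨ (|x - y| = |x - z| ∧ |y| ≤ |z|)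

open Classical in
/-- The rounding function `[·]_s` to the grid `F_s`. -/
noncomputable def roundS (s : ℕ) (x : ℝ) : ℝ :=
  if h : ∃ y, RoundsTo s x y then h.choose else 0

/-- Strictly rounded inner product on `ℝ²`: round each product, then the sum. -/
noncomputable def innerS (s : ℕ) (x k : ℝ × ℝ) : ℝ :=
  roundS s (roundS s (x.1 * k.1) + roundS s (x.2 * k.2))

/-- The rounded Gated DeltaNet row update
`U_{α,β,k,v}(x) = [α · [x - [β⟨x,k⟩_s]_s · k]_s]_s + [β·v·k]_s` (coordinatewise). -/
noncomputable def Uupd (s : ℕ) (α β : ℝ) (k : ℝ × ℝ) (v : ℝ) (x : ℝ × ℝ) : ℝ × ℝ :=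
  let t := roundS s (β * innerS s x k)
  (roundS s (α * roundS s (x.1 - roundS s (t * k.1))) + roundS s (β * v * k.1),
   roundS s (α * roundS s (x.2 - roundS s (t * k.2))) + roundS s (β * v * k.2))

lemma grid_zero (s : ℕ) : (0:ℝ) ∈ Fgrid s := Or.inl rfl

lemma grid_mem (s n : ℕ) (hn : n ≤ 2^(2*s) - 1) :
    (n:ℝ) * (2:ℝ)^(-(s:ℤ)) ∈ Fgrid s := by
  rcases Nat.eq_zero_or_pos n with rfl | hpos
  · left; simp
  · right; exact ⟨n, hpos, hn, Or.inl rfl⟩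

lemma grid_neg {s : ℕ} {x : ℝ} (hx : x ∈ Fgrid s) : -x ∈ Fgrid s := by
  rcases hx with h0 | ⟨k, h1, h2, h3 | h3⟩
  · left; simp_all
  · right; exact ⟨k, h1, h2, Or.inr (by rw [h3])⟩
  · right; exact ⟨k, h1, h2, Or.inl (by rw [h3, neg_neg])⟩

lemma grid_repr {s : ℕ} {x : ℝ} (hx : x ∈ Fgrid s) :
    ∃ m : ℤ, x = (m:ℝ) * (2:ℝ)^(-(s:ℤ)) := by
  rcases hx with h0 | ⟨k, _, _, h3 | h3⟩
  · exact ⟨0, by simpa using h0⟩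
  · exact ⟨k, by exact_mod_cast h3⟩
  · exact ⟨-k, by push_cast; rw [h3]; ring⟩

lemma roundsTo_unique {s : ℕ} {x y y' : ℝ} (h : RoundsTo s x y) (h' : RoundsTo s x y') :
    y = y' := by
  rcases h.2 y' h'.1 with H | ⟨He, Hy⟩
  · rcases h'.2 y h.1 with H' | ⟨He', _⟩
    · linarith
    · linarith [He'.le, He'.ge]
  · rcases h'.2 y h.1 with H' | ⟨He', Hy'⟩
    · linarith
    · have hyy : |y| = |y'| := le_antisymm Hy Hy'
      by_contra hne
      have h1 : y = -y' := by
        rcases abs_eq_abs.mp hyy with h | h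
        · exact absurd h hne
        · exact h
      have h2 : x = 0 := by
        rcases abs_eq_abs.mp He with h | h
        · exact absurd (by linarith) hne
        · rw [h1] at h; linarith
      rcases h.2 0 (grid_zero s) with H0 | ⟨He0, _⟩
      · rw [h2] at H0; simp at H0
        linarith [abs_nonneg y]
      · rw [h2] at He0; simp at He0
        rw [He0] at h1
        exact hne (by linarith)

lemma roundS_eq {s : ℕ} {x y : ℝ} (h : RoundsTo s x y) : roundS s x = y := by
  have hex : ∃ y, RoundsTo s x y := ⟨y, h⟩
  rw [roundS, dif_pos hex]
  exact roundsTo_unique hex.choose_spec h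

lemma roundsTo_nat (s n : ℕ) (hn : n ≤ 2^(2*s) - 1) {x : ℝ}
    (h1 : (n:ℝ) * (2:ℝ)^(-(s:ℤ)) - (2:ℝ)^(-(s:ℤ))/2 < x)
    (h2 : x ≤ (n:ℝ) * (2:ℝ)^(-(s:ℤ)) + (2:ℝ)^(-(s:ℤ))/2) :
    RoundsTo s x ((n:ℝ) * (2:ℝ)^(-(s:ℤ))) := by
  set δ : ℝ := (2:ℝ)^(-(s:ℤ)) with hδ
  have hd : 0 < δ := by rw [hδ]; positivity
  refine ⟨grid_mem s n hn, ?_⟩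
  intro z hz
  obtain ⟨m, rfl⟩ := grid_repr hz
  have habs : |x - (n:ℝ)*δ| ≤ δ/2 := abs_le.mpr ⟨by linarith, by linarith⟩
  rcases lt_trichotomy m (n:ℤ) with hm | hm | hm
  · -- m ≤ n - 1
    have hmr : (m:ℝ) ≤ (n:ℝ) - 1 := by
      have : (m:ℝ) + 1 ≤ (n:ℝ) := by exact_mod_cast hm
      linarith
    left
    have h3 : δ/2 < x - (m:ℝ)*δ := by nlinarith
    calc |x - (n:ℝ)*δ| ≤ δ/2 := habs
      _ < x - (m:ℝ)*δ := h3
      _ ≤ |x - (m:ℝ)*δ| := le_abs_self _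
  · right
    rw [hm]
    exact ⟨rfl, le_rfl⟩
  · have hmr : (n:ℝ) + 1 ≤ (m:ℝ) := by exact_mod_cast hm
    have h4 : δ/2 ≤ (m:ℝ)*δ - x := by nlinarith
    have h5 : δ/2 ≤ |x - (m:ℝ)*δ| := by
      rw [abs_sub_comm]; exact h4.trans (le_abs_self _)
    by_cases hA : |x - (n:ℝ)*δ| < δ/2
    · left; exact lt_of_lt_of_le hA h5
    · have hA' : |x - (n:ℝ)*δ| = δ/2 := le_antisymm habs (not_lt.mp hA)
      have hx : x = (n:ℝ)*δ + δ/2 := by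
        rcases abs_eq (by linarith : (0:ℝ) ≤ δ/2) |>.mp hA' with h | h
        · linarith
        · linarith
      by_cases hB : δ/2 < |x - (m:ℝ)*δ|
      · left; rw [hA']; exact hB
      · right
        constructor
        · rw [hA']; exact le_antisymm h5 (not_lt.mp hB) |>.symm ▸ rfl
        · have hn0 : (0:ℝ) ≤ (n:ℝ)*δ := by positivity
          have hm0 : (0:ℝ) ≤ (m:ℝ)*δ := by nlinarith
          rw [abs_of_nonneg hn0, abs_of_nonneg hm0]
          nlinarith

lemma roundS_nat (s n : ℕ) (hn : n ≤ 2^(2*s) - 1) {x : ℝ}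
    (h1 : (n:ℝ) * (2:ℝ)^(-(s:ℤ)) - (2:ℝ)^(-(s:ℤ))/2 < x)
    (h2 : x ≤ (n:ℝ) * (2:ℝ)^(-(s:ℤ)) + (2:ℝ)^(-(s:ℤ))/2) :
    roundS s x = (n:ℝ) * (2:ℝ)^(-(s:ℤ)) :=
  roundS_eq (roundsTo_nat s n hn h1 h2)

lemma roundsTo_neg {s : ℕ} {x y : ℝ} (h : RoundsTo s x y) : RoundsTo s (-x) (-y) := by
  refine ⟨grid_neg h.1, ?_⟩
  intro z hz
  have hz' : -z ∈ Fgrid s := grid_neg hz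
  rcases h.2 (-z) hz' with H | ⟨He, Hy⟩
  · left
    have e1 : -x - -y = -(x - y) := by ring
    have e2 : -x - z = -(x - -z) := by ring
    rw [e1, e2, abs_neg, abs_neg]; exact H
  · right
    have e1 : -x - -y = -(x - y) := by ring
    have e2 : -x - z = -(x - -z) := by ring
    rw [e1, e2, abs_neg, abs_neg, abs_neg]
    exact ⟨He, by rwa [abs_neg] at Hy⟩

lemma roundS_negnat (s n : ℕ) (hn : n ≤ 2^(2*s) - 1) {x : ℝ}
    (h1 : -((n:ℝ) * (2:ℝ)^(-(s:ℤ))) - (2:ℝ)^(-(s:ℤ))/2 ≤ x)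
    (h2 : x < -((n:ℝ) * (2:ℝ)^(-(s:ℤ))) + (2:ℝ)^(-(s:ℤ))/2) :
    roundS s x = -((n:ℝ) * (2:ℝ)^(-(s:ℤ))) := by
  have h := roundsTo_neg (roundsTo_nat s n hn (x := -x) (by linarith) (by linarith))
  rw [neg_neg] at h
  exact roundS_eq h


set_option maxHeartbeats 2000000 in
lemma kappa_props (s : ℕ) (hs : 2 ≤ s) :
    Real.sqrt 2 / 2 - (2:ℝ)^(-(s:ℤ))/2 ≤ roundS s (1 / Real.sqrt 2) ∧
    roundS s (1 / Real.sqrt 2) ≤ 3/4 := by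
  have hsq : (Real.sqrt 2)^2 = 2 := Real.sq_sqrt (by norm_num)
  have hs0 : 0 < Real.sqrt 2 := Real.sqrt_pos.mpr (by norm_num)
  have hlo2 : (1.41:ℝ) < Real.sqrt 2 := by nlinarith
  have hhi2 : Real.sqrt 2 < 1.5 := by nlinarith
  have hδe : (2:ℝ)^(-(s:ℤ)) = ((2:ℝ)^s)⁻¹ := by
    rw [zpow_neg, zpow_natCast]
  set δ : ℝ := (2:ℝ)^(-(s:ℤ)) with hδ
  set P : ℝ := (2:ℝ)^s with hP
  have hPpos : (0:ℝ) < P := by positivity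
  have hδP : δ * P = 1 := by rw [hδe]; field_simp
  have hP4 : (4:ℝ) ≤ P := by
    calc (4:ℝ) = 2^2 := by norm_num
      _ ≤ 2^s := by exact pow_le_pow_right₀ (by norm_num) hs
  set c : ℝ := P * Real.sqrt 2 / 2 with hc
  set n₀ : ℤ := round c with hn₀
  have h1 : |c - n₀| ≤ 1/2 := abs_sub_round c
  have hup : c ≤ (n₀:ℝ) + 1/2 := by
    have := abs_le.mp h1; linarith [this.2]
  have hlow : (n₀:ℝ) - 1/2 < c := by
    have hle : (n₀:ℝ) - 1/2 ≤ c := by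
      have := abs_le.mp h1; linarith [this.1]
    rcases lt_or_eq_of_le hle with h | h
    · exact h
    · exfalso
      have hrat : Real.sqrt 2 = ((2*n₀ - 1 : ℤ):ℝ) / P := by
        have : P * Real.sqrt 2 = 2*(n₀:ℝ) - 1 := by rw [hc] at h; linarith
        push_cast
        field_simp
        linarith
      apply irrational_sqrt_two
      refine ⟨((2*n₀ - 1 : ℤ):ℚ) / ((2^s : ℤ):ℚ), ?_⟩
      rw [hrat, hP]
      push_cast
      norm_num
  -- upper integer bound
  have hsub : s - 2 + 2 = s := by omega
  have hPa : P = (2:ℝ)^(s-2) * 4 := by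
    rw [hP]
    conv_lhs => rw [← hsub]
    rw [pow_add]; norm_num
  have hapos : (0:ℝ) < (2:ℝ)^(s-2) := by positivity
  set N : ℕ := 3 * 2^(s-2) with hN
  have hNr : (N:ℝ) = 3 * (2:ℝ)^(s-2) := by rw [hN]; push_cast; ring
  have hcN : c < (N:ℝ) := by
    rw [hc, hPa, hNr]; nlinarith
  have hn₀N : n₀ ≤ (N:ℤ) := by
    have : (n₀:ℝ) < (N:ℝ) + 1 := by linarith
    exact_mod_cast Int.lt_add_one_iff.mp (by exact_mod_cast this)
  have hn₀pos : 0 ≤ n₀ := by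
    have h' : (-1:ℝ) < (n₀:ℝ) := by nlinarith
    have h'' : (-1:ℤ) < n₀ := by exact_mod_cast h'
    omega
  set m : ℕ := n₀.toNat with hm
  have hmr : (m:ℝ) = (n₀:ℝ) := by
    rw [hm]; exact_mod_cast congrArg Int.cast (Int.toNat_of_nonneg hn₀pos)
  have hmN : m ≤ N := by
    have := Int.toNat_le_toNat hn₀N
    simpa [hm] using this
  have hmle : m ≤ 2^(2*s) - 1 := by
    have e1 : 2^s = 4 * 2^(s-2) := by
      conv_lhs => rw [← hsub]
      rw [pow_add]; ring
    have e2 : 2 * 2^s ≤ 2^(2*s) := by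
      calc 2 * 2^s = 2^(s+1) := by ring
        _ ≤ 2^(2*s) := Nat.pow_le_pow_right (by norm_num) (by omega)
    have e3 : (4:ℕ) ≤ 2^s := by
      calc (4:ℕ) = 2^2 := by norm_num
        _ ≤ 2^s := Nat.pow_le_pow_right (by norm_num) hs
    omega
  have hd : 0 < δ := by rw [hδe]; positivity
  have hcd : c * δ = Real.sqrt 2 / 2 := by
    have : c * δ = (δ * P) * (Real.sqrt 2 / 2) := by rw [hc]; ring
    rw [this, hδP, one_mul]
  have hNδ : (N:ℝ) * δ = 3/4 := by
    rw [hNr]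
    have h9 : δ * ((2:ℝ)^(s-2) * 4) = 1 := by rw [← hPa]; exact hδP
    nlinarith
  clear_value m N n₀ c P
  have hround : roundS s (1 / Real.sqrt 2) = (m:ℝ) * δ := by
    have hinv : 1 / Real.sqrt 2 = Real.sqrt 2 / 2 := by
      rw [div_eq_div_iff (by positivity) (by norm_num)]; nlinarith
    apply roundS_nat s m hmle
    · rw [hmr, hinv, ← hcd]
      nlinarith [mul_lt_mul_of_pos_right hlow hd]
    · rw [hmr, hinv, ← hcd]
      nlinarith [mul_le_mul_of_nonneg_right hup hd.le]
  constructor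
  · rw [hround]
    rw [hmr, ← hcd]
    nlinarith [mul_le_mul_of_nonneg_right hup hd.le]
  · rw [hround, hmr]
    have h8 : (n₀:ℝ) ≤ (N:ℝ) := by exact_mod_cast hn₀N
    nlinarith


lemma Uupd_eval {s : ℕ} {α β v k1 k2 x1 x2 I t u1 u2 w1 w2 r1 r2 b1 b2 : ℝ}
    (hI : innerS s (x1, x2) (k1, k2) = I)
    (ht : roundS s (β * I) = t)
    (hu1 : roundS s (t * k1) = u1) (hu2 : roundS s (t * k2) = u2)
    (hw1 : roundS s (x1 - u1) = w1) (hw2 : roundS s (x2 - u2) = w2)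
    (hr1 : roundS s (α * w1) = r1) (hr2 : roundS s (α * w2) = r2)
    (hb1 : roundS s (β * v * k1) = b1) (hb2 : roundS s (β * v * k2) = b2) :
    Uupd s α β (k1, k2) v (x1, x2) = (r1 + b1, r2 + b2) := by
  show (roundS s (α * roundS s (x1 - roundS s (roundS s (β * innerS s (x1,x2) (k1,k2)) * k1))) + roundS s (β * v * k1),
        roundS s (α * roundS s (x2 - roundS s (roundS s (β * innerS s (x1,x2) (k1,k2)) * k2))) + roundS s (β * v * k2)) = (r1 + b1, r2 + b2)
  rw [hI, ht, hu1, hu2, hw1, hw2, hr1, hr2, hb1, hb2]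


set_option maxHeartbeats 2000000 in
/-- The Gated DeltaNet parity cell: with `δ = 2^{-s}`, `κ = [1/√2]_s`,
states `P₀ = (0,δ)`, `P₁ = (δ,0)`, hold update `Z` and phase updates `G, F`,
we have `Z(P₀)=P₀`, `Z(P₁)=P₁`, `F(G(P₀))=P₁`, `F(G(P₁))=P₀`. -/
theorem stmt10 (s : ℕ) (hs : 2 ≤ s) :
    let δ : ℝ := (2 : ℝ) ^ (-(s : ℤ))
    let κ : ℝ := roundS s (1 / Real.sqrt 2)
    let P₀ : ℝ × ℝ := (0, δ)
    let P₁ : ℝ × ℝ := (δ, 0)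
    let Z : ℝ × ℝ → ℝ × ℝ := Uupd s (3 / 4) (1 / 4) (1, 0) 0
    let G : ℝ × ℝ → ℝ × ℝ := Uupd s (3 / 4) (1 / 2) (κ, κ) (6 * δ)
    let F : ℝ × ℝ → ℝ × ℝ := Uupd s (1 / 4) (3 / 4) (-κ, κ) 0
    Z P₀ = P₀ ∧ Z P₁ = P₁ ∧ F (G P₀) = P₁ ∧ F (G P₁) = P₀ := by
  intro δ κ P₀ P₁ Z G F
  obtain ⟨hκlo, hκhi⟩ := kappa_props s hs
  have hsq : (Real.sqrt 2)^2 = 2 := Real.sq_sqrt (by norm_num)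
  have hs0 : 0 < Real.sqrt 2 := Real.sqrt_pos.mpr (by norm_num)
  have hlo2 : (1.41:ℝ) < Real.sqrt 2 := by nlinarith
  have hd : (0:ℝ) < δ := by
    show (0:ℝ) < (2:ℝ)^(-(s:ℤ)); positivity
  have hP4 : (4:ℝ) ≤ (2:ℝ)^s := by
    calc (4:ℝ) = 2^2 := by norm_num
      _ ≤ 2^s := by exact pow_le_pow_right₀ (by norm_num) hs
  have hd4 : δ ≤ 1/4 := by
    show (2:ℝ)^(-(s:ℤ)) ≤ 1/4
    rw [zpow_neg, zpow_natCast]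
    have hp : (0:ℝ) < (2:ℝ)^s := by positivity
    have hinv : ((2:ℝ)^s)⁻¹ * (2:ℝ)^s = 1 := by field_simp
    nlinarith [mul_le_mul_of_nonneg_left hP4 (inv_nonneg.mpr hp.le)]
  have hκb : κ ≤ 3/4 := hκhi
  have hκa : 1/2 < κ := by
    have : Real.sqrt 2 / 2 - δ/2 ≤ κ := hκlo
    linarith
  -- product bounds
  have hp1 : δ * (1/2) < δ * κ := by nlinarith
  have hp2 : δ * κ ≤ δ * (3/4) := by nlinarith
  -- nat bounds
  have h16 : (16:ℕ) ≤ 2^(2*s) := by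
    calc (16:ℕ) = 2^4 := by norm_num
      _ ≤ 2^(2*s) := Nat.pow_le_pow_right (by norm_num) (by omega)
  have hb0 : (0:ℕ) ≤ 2^(2*s) - 1 := by omega
  have hb1 : (1:ℕ) ≤ 2^(2*s) - 1 := by omega
  have hb2 : (2:ℕ) ≤ 2^(2*s) - 1 := by omega
  have hb3 : (3:ℕ) ≤ 2^(2*s) - 1 := by omega
  -- rounding facts
  have R0 : roundS s 0 = 0 := by
    have h := roundS_nat s 0 hb0 (x := 0) (by push_cast; linarith) (by push_cast; linarith)
    push_cast at h; linarith
  have R1 : roundS s δ = δ := by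
    have h := roundS_nat s 1 hb1 (x := δ) (by push_cast; linarith) (by push_cast; linarith)
    push_cast at h; linarith
  have R2 : roundS s (2*δ) = 2*δ := by
    have h := roundS_nat s 2 hb2 (x := 2*δ) (by push_cast; linarith) (by push_cast; linarith)
    push_cast at h; linarith
  have R3 : roundS s (3*δ) = 3*δ := by
    have h := roundS_nat s 3 hb3 (x := 3*δ) (by push_cast; linarith) (by push_cast; linarith)
    push_cast at h; linarith
  have Rm1 : roundS s (-δ) = -δ := by
    have h := roundS_negnat s 1 hb1 (x := -δ) (by push_cast; linarith) (by push_cast; linarith)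
    push_cast at h; linarith
  have Rhalf : roundS s (δ/2) = 0 := by
    have h := roundS_nat s 0 hb0 (x := δ/2) (by push_cast; linarith) (by push_cast; linarith)
    push_cast at h; linarith
  have Rq : roundS s (δ/4) = 0 := by
    have h := roundS_nat s 0 hb0 (x := δ/4) (by push_cast; linarith) (by push_cast; linarith)
    push_cast at h; linarith
  have R34 : roundS s (3/4*δ) = δ := by
    have h := roundS_nat s 1 hb1 (x := 3/4*δ) (by push_cast; linarith) (by push_cast; linarith)
    push_cast at h; linarith
  have Rm34 : roundS s (-(3/4*δ)) = -δ := by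
    have h := roundS_negnat s 1 hb1 (x := -(3/4*δ)) (by push_cast; linarith) (by push_cast; linarith)
    push_cast at h; linarith
  have Rκ1 : roundS s (δ*κ) = δ := by
    have h := roundS_nat s 1 hb1 (x := δ*κ) (by push_cast; linarith) (by push_cast; linarith)
    push_cast at h; linarith
  have Rκm1 : roundS s (-(δ*κ)) = -δ := by
    have h := roundS_negnat s 1 hb1 (x := -(δ*κ)) (by push_cast; linarith) (by push_cast; linarith)
    push_cast at h; linarith
  have Rκ2 : roundS s (2*(δ*κ)) = δ := by
    have h := roundS_nat s 1 hb1 (x := 2*(δ*κ)) (by push_cast; linarith) (by push_cast; linarith)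
    push_cast at h; linarith
  have Rκm2 : roundS s (-(2*(δ*κ))) = -δ := by
    have h := roundS_negnat s 1 hb1 (x := -(2*(δ*κ))) (by push_cast; linarith) (by push_cast; linarith)
    push_cast at h; linarith
  have Rκ3 : roundS s (3*(δ*κ)) = 2*δ := by
    have h := roundS_nat s 2 hb2 (x := 3*(δ*κ)) (by push_cast; linarith) (by push_cast; linarith)
    push_cast at h; linarith
  have Rκm3 : roundS s (-(3*(δ*κ))) = -(2*δ) := by
    have h := roundS_negnat s 2 hb2 (x := -(3*(δ*κ))) (by push_cast; linarith) (by push_cast; linarith)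
    push_cast at h; linarith
  -- the six evaluations
  have hZ0 : Uupd s (3/4) (1/4) ((1:ℝ), (0:ℝ)) 0 ((0:ℝ), δ) = (0 + 0, δ + 0) := by
    refine Uupd_eval (I := 0) (t := 0) (u1 := 0) (u2 := 0) (w1 := 0) (w2 := δ)
      ?_ ?_ ?_ ?_ ?_ ?_ ?_ ?_ ?_ ?_
    · show roundS s (roundS s ((0:ℝ)*1) + roundS s (δ*0)) = 0
      rw [show (0:ℝ)*1 = 0 by ring, show δ*0 = 0 by ring, R0, add_zero]; exact R0
    · rw [show (1/4:ℝ)*0 = 0 by ring]; exact R0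
    · rw [show (0:ℝ)*1 = 0 by ring]; exact R0
    · rw [show (0:ℝ)*0 = 0 by ring]; exact R0
    · rw [show (0:ℝ)-0 = 0 by ring]; exact R0
    · rw [show δ-0 = δ by ring]; exact R1
    · rw [show (3/4:ℝ)*0 = 0 by ring]; exact R0
    · exact R34
    · rw [show (1/4:ℝ)*0*1 = 0 by ring]; exact R0
    · rw [show (1/4:ℝ)*0*0 = 0 by ring]; exact R0
  have hZ1 : Uupd s (3/4) (1/4) ((1:ℝ), (0:ℝ)) 0 (δ, (0:ℝ)) = (δ + 0, 0 + 0) := by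
    refine Uupd_eval (I := δ) (t := 0) (u1 := 0) (u2 := 0) (w1 := δ) (w2 := 0)
      ?_ ?_ ?_ ?_ ?_ ?_ ?_ ?_ ?_ ?_
    · show roundS s (roundS s (δ*1) + roundS s ((0:ℝ)*0)) = δ
      rw [show δ*1 = δ by ring, show (0:ℝ)*0 = 0 by ring, R0, R1, add_zero]; exact R1
    · rw [show (1/4:ℝ)*δ = δ/4 by ring]; exact Rq
    · rw [show (0:ℝ)*1 = 0 by ring]; exact R0
    · rw [show (0:ℝ)*0 = 0 by ring]; exact R0
    · rw [show δ-0 = δ by ring]; exact R1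
    · rw [show (0:ℝ)-0 = 0 by ring]; exact R0
    · exact R34
    · rw [show (3/4:ℝ)*0 = 0 by ring]; exact R0
    · rw [show (1/4:ℝ)*0*1 = 0 by ring]; exact R0
    · rw [show (1/4:ℝ)*0*0 = 0 by ring]; exact R0
  have hG0 : Uupd s (3/4) (1/2) (κ, κ) (6*δ) ((0:ℝ), δ) = (0 + 2*δ, δ + 2*δ) := by
    refine Uupd_eval (I := δ) (t := 0) (u1 := 0) (u2 := 0) (w1 := 0) (w2 := δ)
      ?_ ?_ ?_ ?_ ?_ ?_ ?_ ?_ ?_ ?_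
    · show roundS s (roundS s ((0:ℝ)*κ) + roundS s (δ*κ)) = δ
      rw [show (0:ℝ)*κ = 0 by ring, R0, Rκ1, zero_add]; exact R1
    · rw [show (1/2:ℝ)*δ = δ/2 by ring]; exact Rhalf
    · rw [show (0:ℝ)*κ = 0 by ring]; exact R0
    · rw [show (0:ℝ)*κ = 0 by ring]; exact R0
    · rw [show (0:ℝ)-0 = 0 by ring]; exact R0
    · rw [show δ-0 = δ by ring]; exact R1
    · rw [show (3/4:ℝ)*0 = 0 by ring]; exact R0
    · exact R34
    · rw [show (1/2:ℝ)*(6*δ)*κ = 3*(δ*κ) by ring]; exact Rκ3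
    · rw [show (1/2:ℝ)*(6*δ)*κ = 3*(δ*κ) by ring]; exact Rκ3
  have hG1 : Uupd s (3/4) (1/2) (κ, κ) (6*δ) (δ, (0:ℝ)) = (δ + 2*δ, 0 + 2*δ) := by
    refine Uupd_eval (I := δ) (t := 0) (u1 := 0) (u2 := 0) (w1 := δ) (w2 := 0)
      ?_ ?_ ?_ ?_ ?_ ?_ ?_ ?_ ?_ ?_
    · show roundS s (roundS s (δ*κ) + roundS s ((0:ℝ)*κ)) = δ
      rw [show (0:ℝ)*κ = 0 by ring, R0, Rκ1, add_zero]; exact R1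
    · rw [show (1/2:ℝ)*δ = δ/2 by ring]; exact Rhalf
    · rw [show (0:ℝ)*κ = 0 by ring]; exact R0
    · rw [show (0:ℝ)*κ = 0 by ring]; exact R0
    · rw [show δ-0 = δ by ring]; exact R1
    · rw [show (0:ℝ)-0 = 0 by ring]; exact R0
    · exact R34
    · rw [show (3/4:ℝ)*0 = 0 by ring]; exact R0
    · rw [show (1/2:ℝ)*(6*δ)*κ = 3*(δ*κ) by ring]; exact Rκ3
    · rw [show (1/2:ℝ)*(6*δ)*κ = 3*(δ*κ) by ring]; exact Rκ3
  have hF0 : Uupd s (1/4) (3/4) (-κ, κ) 0 (2*δ, 3*δ) = (δ + 0, 0 + 0) := by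
    refine Uupd_eval (I := δ) (t := δ) (u1 := -δ) (u2 := δ) (w1 := 3*δ) (w2 := 2*δ)
      ?_ ?_ ?_ ?_ ?_ ?_ ?_ ?_ ?_ ?_
    · show roundS s (roundS s ((2*δ)*(-κ)) + roundS s ((3*δ)*κ)) = δ
      rw [show (2*δ)*(-κ) = -(2*(δ*κ)) by ring, show (3*δ)*κ = 3*(δ*κ) by ring,
        Rκm2, Rκ3, show -δ + 2*δ = δ by ring]
      exact R1
    · rw [show (3/4:ℝ)*δ = 3/4*δ by ring]; exact R34
    · rw [show δ*(-κ) = -(δ*κ) by ring]; exact Rκm1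
    · rw [show δ*κ = δ*κ by ring]; exact Rκ1
    · rw [show 2*δ - (-δ) = 3*δ by ring]; exact R3
    · rw [show 3*δ - δ = 2*δ by ring]; exact R2
    · rw [show (1/4:ℝ)*(3*δ) = 3/4*δ by ring]; exact R34
    · rw [show (1/4:ℝ)*(2*δ) = δ/2 by ring]; exact Rhalf
    · rw [show (3/4:ℝ)*0*(-κ) = 0 by ring]; exact R0
    · rw [show (3/4:ℝ)*0*κ = 0 by ring]; exact R0
  have hF1 : Uupd s (1/4) (3/4) (-κ, κ) 0 (3*δ, 2*δ) = (0 + 0, δ + 0) := by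
    refine Uupd_eval (I := -δ) (t := -δ) (u1 := δ) (u2 := -δ) (w1 := 2*δ) (w2 := 3*δ)
      ?_ ?_ ?_ ?_ ?_ ?_ ?_ ?_ ?_ ?_
    · show roundS s (roundS s ((3*δ)*(-κ)) + roundS s ((2*δ)*κ)) = -δ
      rw [show (3*δ)*(-κ) = -(3*(δ*κ)) by ring, show (2*δ)*κ = 2*(δ*κ) by ring,
        Rκm3, Rκ2, show -(2*δ) + δ = -δ by ring]
      exact Rm1
    · rw [show (3/4:ℝ)*(-δ) = -(3/4*δ) by ring]; exact Rm34
    · rw [show (-δ)*(-κ) = δ*κ by ring]; exact Rκ1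
    · rw [show (-δ)*κ = -(δ*κ) by ring]; exact Rκm1
    · rw [show 3*δ - δ = 2*δ by ring]; exact R2
    · rw [show 2*δ - (-δ) = 3*δ by ring]; exact R3
    · rw [show (1/4:ℝ)*(2*δ) = δ/2 by ring]; exact Rhalf
    · rw [show (1/4:ℝ)*(3*δ) = 3/4*δ by ring]; exact R34
    · rw [show (3/4:ℝ)*0*(-κ) = 0 by ring]; exact R0
    · rw [show (3/4:ℝ)*0*κ = 0 by ring]; exact R0
  refine ⟨?_, ?_, ?_, ?_⟩
  · show Uupd s (3/4) (1/4) ((1:ℝ), (0:ℝ)) 0 ((0:ℝ), δ) = ((0:ℝ), δ)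
    rw [hZ0]; norm_num
  · show Uupd s (3/4) (1/4) ((1:ℝ), (0:ℝ)) 0 (δ, (0:ℝ)) = (δ, (0:ℝ))
    rw [hZ1]; norm_num
  · show Uupd s (1/4) (3/4) (-κ, κ) 0 (Uupd s (3/4) (1/2) (κ, κ) (6*δ) ((0:ℝ), δ)) = (δ, (0:ℝ))
    rw [hG0, show ((0:ℝ) + 2*δ, δ + 2*δ) = ((2*δ :ℝ), 3*δ) by norm_num; ring, hF0]
    norm_num
  · show Uupd s (1/4) (3/4) (-κ, κ) 0 (Uupd s (3/4) (1/2) (κ, κ) (6*δ) (δ, (0:ℝ))) = ((0:ℝ), δ)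
    rw [hG1, show ((δ:ℝ) + 2*δ, (0:ℝ) + 2*δ) = ((3*δ :ℝ), 2*δ) by norm_num; ring, hF1]
    norm_num
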